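/- arXiv:2012.06403 — 2 statements merged into one kernel-verified Lean document; each statement's English description precedes it below -/
import Mathlib

section
/- Let A and B be commutative Fréchet algebras. A continuous function F : Δ(A × B) → ℂ belongs to 𝓜(A × B) if and only if the function Φ : Δ(A) → ℂ, Φ(φ) := F(φ∘pr₁), belongs to 𝓜(A) and the function Ψ : Δ(B) → ℂ, Ψ(ψ) := F(ψ∘pr₂), belongs to 𝓜(B). In other words, 𝓜(A ⊕ B) = 𝓜(A) × 𝓜(B). -/
open WeakDual Filter Topology Bornology

/-- `𝓜(A)`: a function `Φ : Δ(A) → ℂ` is a *multiplier function* of the commutative topological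
`ℂ`-algebra `A` if it is continuous and `Φ ⬝ Â ⊆ Â`, i.e. for every `a ∈ A` there is `b ∈ A`
with `Φ(φ) φ(a) = φ(b)` for all characters `φ`. -/
def IsMultiplierFunction {A : Type*} [NonUnitalCommRing A] [Module ℂ A] [TopologicalSpace A]
    (Φ : characterSpace ℂ A → ℂ) : Prop :=
  Continuous Φ ∧ ∀ a : A, ∃ b : A, ∀ φ : characterSpace ℂ A, Φ φ * φ a = φ b

/-- A (not necessarily unital) commutative topological `ℂ`-algebra is a *Fréchet algebra* if it
is complete and its topology is generated by a countable increasing family of submultiplicative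
seminorms (hence it is a complete metrizable locally convex algebra). -/
def IsFrechetAlgebra (A : Type*) [NonUnitalCommRing A] [Module ℂ A]
    [UniformSpace A] : Prop :=
  ∃ p : ℕ → Seminorm ℂ A, WithSeminorms p ∧ Monotone p ∧
    (∀ (ℓ : ℕ) (x y : A), p ℓ (x * y) ≤ p ℓ x * p ℓ y) ∧ CompleteSpace A

section CharMaps

variable {A B : Type*}
  [NonUnitalCommRing A] [Module ℂ A] [TopologicalSpace A]
  [NonUnitalCommRing B] [Module ℂ B] [TopologicalSpace B]

/-- The character `φ ∘ pr₁` of `A × B` associated to a character `φ` of `A`. -/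
noncomputable def charFst (φ : characterSpace ℂ A) : characterSpace ℂ (A × B) :=
  ⟨((CharacterSpace.toCLM φ).comp (ContinuousLinearMap.fst ℂ A B) : A × B →L[ℂ] ℂ), by
    refine ⟨?_, fun x y => ?_⟩
    · intro h
      apply φ.2.1
      refine DFunLike.ext _ _ fun a => ?_
      have := DFunLike.congr_fun h (a, 0)
      exact this
    · exact φ.2.2 x.1 y.1⟩

/-- The character `ψ ∘ pr₂` of `A × B` associated to a character `ψ` of `B`. -/
noncomputable def charSnd (ψ : characterSpace ℂ B) : characterSpace ℂ (A × B) :=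
  ⟨((CharacterSpace.toCLM ψ).comp (ContinuousLinearMap.snd ℂ A B) : A × B →L[ℂ] ℂ), by
    refine ⟨?_, fun x y => ?_⟩
    · intro h
      apply ψ.2.1
      refine DFunLike.ext _ _ fun b => ?_
      have := DFunLike.congr_fun h (0, b)
      exact this
    · exact ψ.2.2 x.2 y.2⟩

end CharMaps

/-! Since `(a, 0) * (0, b) = 0`, a character of `A × B` vanishes on `0 × B` or on `A × 0`, and
accordingly factors through `pr₁` or `pr₂`, but not both.  The two images in `Δ(A × B)` are cut
out by the closed conditions `χ (0, b) = 0` resp. `χ (a, 0) = 0`, so they are complementary closed,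
hence open, sets, and `φ ↦ φ ∘ pr₁`, `ψ ↦ ψ ∘ pr₂` are embeddings because `φ ∘ pr₁` recovers `φ`
on `A × 0`.  Thus `Δ(A × B) ≅ Δ(A) ⊕ Δ(B)`, which gives the continuity part.
For the multiplier part, if `a'` serves `a` and `b'` serves `b`, then `(a', b')` serves `(a, b)`. -/

open Set Topology

namespace WeakDual.CharacterSpace

section

variable {C : Type*} [NonUnitalNonAssocSemiring C] [TopologicalSpace C] [Module ℂ C]

theorem isInducing_coe : IsInducing fun χ : characterSpace ℂ C => (χ : C → ℂ) :=
  (show IsInducing fun (x : WeakDual ℂ C) (c : C) => x c from ⟨rfl⟩).comp .subtypeVal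

theorem isClosed_setOf_forall_apply_eq_zero {ι : Type*} (f : ι → C) :
    IsClosed {χ : characterSpace ℂ C | ∀ i, χ (f i) = 0} := by
  rw [ofPred_forall]
  exact isClosed_iInter fun i =>
    isClosed_eq ((continuous_apply (f i)).comp isInducing_coe.continuous) continuous_const

end

variable {A B : Type*}
  [NonUnitalCommRing A] [Module ℂ A] [TopologicalSpace A]
  [NonUnitalCommRing B] [Module ℂ B] [TopologicalSpace B]

theorem apply_prod (χ : characterSpace ℂ (A × B)) (x : A × B) :
    χ x = χ (x.1, 0) + χ (0, x.2) := by
  rw [← map_add, Prod.mk_add_mk, add_zero, zero_add]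

theorem apply_zero_mk_eq_zero_or_apply_mk_zero_eq_zero
    (χ : characterSpace ℂ (A × B)) : (∀ b : B, χ (0, b) = 0) ∨ ∀ a : A, χ (a, 0) = 0 := by
  by_contra! ⟨⟨b, hb⟩, a, ha⟩
  have : χ (a, 0) * χ (0, b) = 0 := by
    rw [← map_mul, Prod.mk_mul_mk, mul_zero, zero_mul, Prod.mk_zero_zero, map_zero]
  exact mul_ne_zero ha hb this

end WeakDual.CharacterSpace

section ProductCharacters

variable {A B : Type*}
  [NonUnitalCommRing A] [Module ℂ A] [TopologicalSpace A]
  [NonUnitalCommRing B] [Module ℂ B] [TopologicalSpace B]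

@[simp] theorem charFst_apply (φ : characterSpace ℂ A) (x : A × B) : charFst φ x = φ x.1 := rfl

@[simp] theorem charSnd_apply (ψ : characterSpace ℂ B) (x : A × B) :
    charSnd (A := A) ψ x = ψ x.2 := rfl

theorem continuous_charFst : Continuous (charFst : characterSpace ℂ A → characterSpace ℂ (A × B)) :=
  CharacterSpace.isInducing_coe.continuous_iff.mpr <| continuous_pi fun x =>
    (continuous_apply x.1).comp CharacterSpace.isInducing_coe.continuous

theorem continuous_charSnd : Continuous (charSnd : characterSpace ℂ B → characterSpace ℂ (A × B)) :=
  CharacterSpace.isInducing_coe.continuous_iff.mpr <| continuous_pi fun x =>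
    (continuous_apply x.2).comp CharacterSpace.isInducing_coe.continuous

theorem isInducing_charFst : IsInducing (charFst : characterSpace ℂ A → characterSpace ℂ (A × B)) :=
  .of_comp continuous_charFst
    (continuous_pi fun a => (continuous_apply ((a, 0) : A × B)).comp
      CharacterSpace.isInducing_coe.continuous)
    CharacterSpace.isInducing_coe

theorem isInducing_charSnd : IsInducing (charSnd : characterSpace ℂ B → characterSpace ℂ (A × B)) :=
  .of_comp continuous_charSnd
    (continuous_pi fun b => (continuous_apply ((0, b) : A × B)).comp
      CharacterSpace.isInducing_coe.continuous)
    CharacterSpace.isInducing_coe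

theorem mem_range_charFst_iff {χ : characterSpace ℂ (A × B)} :
    χ ∈ range charFst ↔ ∀ b : B, χ (0, b) = 0 := by
  refine ⟨by rintro ⟨φ, rfl⟩ b; exact map_zero φ, fun h => ?_⟩
  refine ⟨⟨(CharacterSpace.toCLM χ).comp (ContinuousLinearMap.inl ℂ A B), fun h0 => χ.2.1 ?_,
    fun x y => by
      have := map_mul χ (x, 0) (y, 0)
      rwa [Prod.mk_mul_mk, mul_zero] at this⟩, ?_⟩
  · refine DFunLike.ext _ _ fun x => ?_
    change χ x = 0
    rw [CharacterSpace.apply_prod χ x, h, add_zero]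
    exact DFunLike.congr_fun h0 x.1
  · ext x
    rw [charFst_apply, CharacterSpace.apply_prod χ x, h, add_zero]
    rfl

theorem mem_range_charSnd_iff {χ : characterSpace ℂ (A × B)} :
    χ ∈ range charSnd ↔ ∀ a : A, χ (a, 0) = 0 := by
  refine ⟨by rintro ⟨ψ, rfl⟩ a; exact map_zero ψ, fun h => ?_⟩
  refine ⟨⟨(CharacterSpace.toCLM χ).comp (ContinuousLinearMap.inr ℂ A B), fun h0 => χ.2.1 ?_,
    fun x y => by
      have := map_mul χ (0, x) (0, y)
      rwa [Prod.mk_mul_mk, zero_mul] at this⟩, ?_⟩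
  · refine DFunLike.ext _ _ fun x => ?_
    change χ x = 0
    rw [CharacterSpace.apply_prod χ x, h, zero_add]
    exact DFunLike.congr_fun h0 x.2
  · ext x
    rw [charSnd_apply, CharacterSpace.apply_prod χ x, h, zero_add]
    rfl

theorem range_charFst_eq_compl_range_charSnd :
    range (charFst : characterSpace ℂ A → characterSpace ℂ (A × B)) = (range charSnd)ᶜ := by
  ext χ
  rw [mem_compl_iff, mem_range_charFst_iff, mem_range_charSnd_iff]
  refine ⟨fun hB hA => χ.2.1 (DFunLike.ext _ _ fun x => ?_), fun h => ?_⟩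
  · change χ x = 0
    rw [CharacterSpace.apply_prod χ x, hA, hB, add_zero]
  · exact (CharacterSpace.apply_zero_mk_eq_zero_or_apply_mk_zero_eq_zero χ).resolve_right h

theorem isClosed_range_charFst :
    IsClosed (range (charFst : characterSpace ℂ A → characterSpace ℂ (A × B))) := by
  rw [Set.ext fun _ => mem_range_charFst_iff]
  exact CharacterSpace.isClosed_setOf_forall_apply_eq_zero fun b : B => ((0, b) : A × B)

theorem isClosed_range_charSnd :
    IsClosed (range (charSnd : characterSpace ℂ B → characterSpace ℂ (A × B))) := by
  rw [Set.ext fun _ => mem_range_charSnd_iff]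
  exact CharacterSpace.isClosed_setOf_forall_apply_eq_zero fun a : A => ((a, 0) : A × B)

theorem isOpenMap_charFst : IsOpenMap (charFst : characterSpace ℂ A → characterSpace ℂ (A × B)) :=
  isInducing_charFst.isOpenMap <| by
    rw [range_charFst_eq_compl_range_charSnd]
    exact isClosed_range_charSnd.isOpen_compl

theorem isOpenMap_charSnd : IsOpenMap (charSnd : characterSpace ℂ B → characterSpace ℂ (A × B)) :=
  isInducing_charSnd.isOpenMap <| by
    rw [eq_compl_comm.mp (range_charFst_eq_compl_range_charSnd (A := A))]
    exact isClosed_range_charFst.isOpen_compl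

theorem surjective_sumElim_charFst_charSnd :
    Function.Surjective
      (Sum.elim (charFst : characterSpace ℂ A → characterSpace ℂ (A × B)) charSnd) := by
  rw [← range_eq_univ, Set.Sum.elim_range, range_charFst_eq_compl_range_charSnd, compl_union_self]

theorem isQuotientMap_sumElim_charFst_charSnd :
    IsQuotientMap (Sum.elim (charFst : characterSpace ℂ A → characterSpace ℂ (A × B)) charSnd) :=
  (isOpenMap_charFst.sumElim isOpenMap_charSnd).isQuotientMap
    (continuous_charFst.sumElim continuous_charSnd) surjective_sumElim_charFst_charSnd

theorem continuous_iff_continuous_comp_charFst_and_charSnd {X : Type*} [TopologicalSpace X]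
    {F : characterSpace ℂ (A × B) → X} :
    Continuous F ↔ Continuous (F ∘ charFst) ∧ Continuous (F ∘ charSnd) := by
  rw [isQuotientMap_sumElim_charFst_charSnd.continuous_iff, continuous_sum_dom]
  rfl

theorem forall_characterSpace_prod {P : characterSpace ℂ (A × B) → Prop} :
    (∀ χ, P χ) ↔ (∀ φ, P (charFst φ)) ∧ ∀ ψ, P (charSnd ψ) := by
  rw [surjective_sumElim_charFst_charSnd.forall, Sum.forall]
  rfl

theorem forall_exists_mul_apply_prod_iff {F : characterSpace ℂ (A × B) → ℂ} :
    (∀ x : A × B, ∃ y : A × B, ∀ χ : characterSpace ℂ (A × B), F χ * χ x = χ y) ↔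
      (∀ a : A, ∃ a' : A, ∀ φ : characterSpace ℂ A, F (charFst φ) * φ a = φ a') ∧
      ∀ b : B, ∃ b' : B, ∀ ψ : characterSpace ℂ B, F (charSnd ψ) * ψ b = ψ b' := by
  simp only [forall_characterSpace_prod (P := fun χ => F χ * χ _ = χ _), charFst_apply,
    charSnd_apply]
  refine ⟨fun h => ⟨fun a => ?_, fun b => ?_⟩, fun ⟨hA, hB⟩ ⟨a, b⟩ => ?_⟩
  · obtain ⟨y, hy, -⟩ := h (a, 0)
    exact ⟨y.1, hy⟩
  · obtain ⟨y, -, hy⟩ := h (0, b)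
    exact ⟨y.2, hy⟩
  · obtain ⟨a', ha'⟩ := hA a
    obtain ⟨b', hb'⟩ := hB b
    exact ⟨(a', b'), ha', hb'⟩

end ProductCharacters

theorem isMultiplierFunction_prod_iff_general
    {A B : Type*}
    [NonUnitalCommRing A] [Module ℂ A]
    [UniformSpace A]
    [NonUnitalCommRing B] [Module ℂ B]
    [UniformSpace B]
    (F : characterSpace ℂ (A × B) → ℂ) :
    IsMultiplierFunction F ↔
      IsMultiplierFunction (fun φ : characterSpace ℂ A => F (charFst φ)) ∧
      IsMultiplierFunction (fun ψ : characterSpace ℂ B => F (charSnd ψ)) := by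
  rw [IsMultiplierFunction, IsMultiplierFunction, IsMultiplierFunction,
    continuous_iff_continuous_comp_charFst_and_charSnd, forall_exists_mul_apply_prod_iff]
  exact and_and_and_comm

/-- Let `A` and `B` be commutative Fréchet algebras.  A function
`F : Δ(A × B) → ℂ` belongs to `𝓜(A × B)` if and only if `Φ : φ ↦ F(φ ∘ pr₁)` belongs to `𝓜(A)`
and `Ψ : ψ ↦ F(ψ ∘ pr₂)` belongs to `𝓜(B)`.  In other words,
`𝓜(A ⊕ B) = 𝓜(A) × 𝓜(B)`. -/
theorem isMultiplierFunction_prod_iff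
    {A B : Type*}
    [NonUnitalCommRing A] [Module ℂ A] [SMulCommClass ℂ A A] [IsScalarTower ℂ A A]
    [UniformSpace A] [IsUniformAddGroup A]
    [NonUnitalCommRing B] [Module ℂ B] [SMulCommClass ℂ B B] [IsScalarTower ℂ B B]
    [UniformSpace B] [IsUniformAddGroup B]
    (hA : IsFrechetAlgebra A) (hB : IsFrechetAlgebra B)
    (F : characterSpace ℂ (A × B) → ℂ) :
    IsMultiplierFunction F ↔
      IsMultiplierFunction (fun φ : characterSpace ℂ A => F (charFst φ)) ∧
      IsMultiplierFunction (fun ψ : characterSpace ℂ B => F (charSnd ψ)) :=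
  isMultiplierFunction_prod_iff_general F
end

section
/- Let A be a commutative topological ℂ-algebra whose character space Δ(A) is discrete, and let I be a closed ideal of A, regarded as a commutative topological ℂ-algebra with the subspace topology. Then the character space Δ(I) is discrete. -/
/-!
A character `φ` of `I` with `φ u ≠ 0` extends to the character `a ↦ φ (a u) / φ u` of `A`.
On the open set `{φ | φ u ≠ 0}` this extension is continuous and injective (it restricts back
to `φ`), so that set embeds into the discrete space `Δ(A)` and is itself discrete. Such sets
cover `Δ(I)`, hence every point of `Δ(I)` is isolated.
-/

open WeakDual

theorem isOpen_singleton_of_mem_of_discreteTopology {X : Type*} [TopologicalSpace X] {U : Set X}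
    (hU : IsOpen U) [DiscreteTopology U] {x : X} (hx : x ∈ U) : IsOpen {x} := by
  simpa using hU.isOpenMap_subtype_val {⟨x, hx⟩} (isOpen_discrete _)

namespace Ideal

variable (𝕜 : Type*) {A : Type*} [Field 𝕜] [CommRing A] [Algebra 𝕜 A] [TopologicalSpace A]
  [ContinuousMul A] (I : Ideal A)

def mulRightCLM (u : I) : A →L[𝕜] I where
  toFun a := ⟨a * u, I.mul_mem_left a u.2⟩
  map_add' a b := Subtype.ext (add_mul a b u)
  map_smul' c a := Subtype.ext (smul_mul_assoc c a u)
  cont := (continuous_mul_const _).subtype_mk _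

@[simp] theorem mulRightCLM_apply_coe (u x : I) : I.mulRightCLM 𝕜 u x = x * u := rfl

end Ideal

namespace WeakDual.CharacterSpace

section

variable {𝕜 B : Type*} [CommSemiring 𝕜] [TopologicalSpace 𝕜] [ContinuousAdd 𝕜]
  [ContinuousConstSMul 𝕜 𝕜] [NonUnitalNonAssocSemiring B] [TopologicalSpace B] [Module 𝕜 B]

theorem exists_apply_ne_zero (φ : characterSpace 𝕜 B) : ∃ x, φ x ≠ 0 := by
  by_contra! h
  exact φ.2.1 (ContinuousLinearMap.ext h)

theorem isOpen_setOf_apply_ne_zero [T1Space 𝕜] (x : B) :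
    IsOpen {φ : characterSpace 𝕜 B | φ x ≠ 0} :=
  isOpen_compl_singleton.preimage ((eval_continuous x).comp continuous_subtype_val)

end

variable {𝕜 A : Type*} [Field 𝕜] [TopologicalSpace 𝕜] [IsTopologicalDivisionRing 𝕜]
  [CommRing A] [Algebra 𝕜 A] [TopologicalSpace A] [ContinuousMul A] {I : Ideal A}

-- Junk value `0` when `φ u = 0`.
noncomputable def extendOfIdeal (u : I) (φ : characterSpace 𝕜 I) : WeakDual 𝕜 A :=
  (φ u)⁻¹ • (toCLM φ).comp (I.mulRightCLM 𝕜 u)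

theorem extendOfIdeal_apply (u : I) (φ : characterSpace 𝕜 I) (a : A) :
    extendOfIdeal u φ a = (φ u)⁻¹ * φ (I.mulRightCLM 𝕜 u a) := rfl

variable {u : I} {φ : characterSpace 𝕜 I}

theorem extendOfIdeal_apply_coe (hφ : φ u ≠ 0) (x : I) : extendOfIdeal u φ x = φ x := by
  rw [extendOfIdeal_apply, Ideal.mulRightCLM_apply_coe, map_mul, mul_comm,
    mul_inv_cancel_right₀ hφ]

theorem extendOfIdeal_mem_characterSpace (hφ : φ u ≠ 0) :
    extendOfIdeal u φ ∈ characterSpace 𝕜 A := by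
  refine ⟨fun h ↦ hφ ?_, fun a b ↦ ?_⟩
  · rw [← extendOfIdeal_apply_coe hφ u, h]
    rfl
  · have key : φ (I.mulRightCLM 𝕜 u (a * b)) * φ u =
        φ (I.mulRightCLM 𝕜 u a) * φ (I.mulRightCLM 𝕜 u b) := by
      rw [← map_mul, ← map_mul]
      congr 1
      exact Subtype.ext (show a * b * u * u = a * u * (b * u) by ring)
    simp only [extendOfIdeal_apply]
    field_simp
    linear_combination key

theorem continuousOn_extendOfIdeal (u : I) :
    ContinuousOn (extendOfIdeal (𝕜 := 𝕜) u) {φ | φ u ≠ 0} := by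
  rw [continuousOn_iff_continuous_domRestrict]
  refine continuous_of_continuous_eval fun a ↦ ?_
  have hev (x : I) : Continuous fun φ : {φ : characterSpace 𝕜 I | φ u ≠ 0} ↦ φ.1 x :=
    (eval_continuous x).comp (continuous_subtype_val.comp continuous_subtype_val)
  exact ((hev u).inv₀ fun φ ↦ φ.2).mul (hev _)

theorem injOn_extendOfIdeal (u : I) :
    Set.InjOn (extendOfIdeal (𝕜 := 𝕜) u) {φ | φ u ≠ 0} := fun φ hφ ψ hψ h ↦
  ext fun x ↦ by rw [← extendOfIdeal_apply_coe hφ, ← extendOfIdeal_apply_coe hψ, h]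

theorem discreteTopology_setOf_apply_ne_zero [DiscreteTopology (characterSpace 𝕜 A)] (u : I) :
    DiscreteTopology {φ : characterSpace 𝕜 I | φ u ≠ 0} := by
  let F (φ : {φ : characterSpace 𝕜 I | φ u ≠ 0}) : characterSpace 𝕜 A :=
    ⟨extendOfIdeal u φ, extendOfIdeal_mem_characterSpace φ.2⟩
  have hF : Continuous F := (continuousOn_extendOfIdeal u).domRestrict.subtype_mk _
  exact .of_continuous_injective hF fun φ ψ h ↦
    Subtype.ext (injOn_extendOfIdeal u φ.2 ψ.2 (congrArg Subtype.val h))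

end WeakDual.CharacterSpace

open CharacterSpace in
theorem characterSpace_ideal_discrete_general
    {A : Type*} [CommRing A] [Algebra ℂ A] [TopologicalSpace A] [IsTopologicalRing A]
    (hA : DiscreteTopology (characterSpace ℂ A))
    (I : Ideal A) :
    DiscreteTopology (characterSpace ℂ ↥I) := by
  refine discreteTopology_iff_isOpen_singleton.mpr fun φ ↦ ?_
  obtain ⟨u, hu⟩ := exists_apply_ne_zero φ
  have := discreteTopology_setOf_apply_ne_zero (𝕜 := ℂ) u
  exact isOpen_singleton_of_mem_of_discreteTopology (isOpen_setOf_apply_ne_zero u) hu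

/-- Let `A` be a commutative topological `ℂ`-algebra whose character space
`Δ(A)` is discrete, and let `I` be a closed ideal of `A`, regarded as a commutative topological
`ℂ`-algebra with the subspace topology.  Then the character space `Δ(I)` is discrete. -/
theorem characterSpace_ideal_discrete
    {A : Type*} [CommRing A] [Algebra ℂ A] [TopologicalSpace A] [IsTopologicalRing A]
    [ContinuousSMul ℂ A]
    (hA : DiscreteTopology (characterSpace ℂ A))
    (I : Ideal A) (hIc : IsClosed (I : Set A)) :
    DiscreteTopology (characterSpace ℂ ↥I) :=
  characterSpace_ideal_discrete_general hA I
end
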